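/- (Classification of cylindrical dominative p-harmonic functions.) Let n ≥ 2, 2 < p < ∞ and 2 ≤ k ≤ n. Let u(x) = U(|Qᵀ(x−x₀)|) be a k-cylindrical function with U a C² function on (0,∞), Q an n×k real matrix with QᵀQ = I_k and x₀ ∈ ℝⁿ. If Δ_p u(x) = 0 and D_p u(x) = 0 at every x with Qᵀ(x−x₀) ≠ 0, then u is a k-cylindrical fundamental solution, i.e. there exist C₁ ≥ 0 and C₂ ∈ ℝ with U(r) = C₁·W_{k,p}(r) + C₂ for all r > 0, where W_{k,p}(|x|) = w_{k,p}(x). -/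

import Mathlib

open scoped ENNReal
open Filter Matrix

noncomputable section

/-- Hessian matrix of `u` at `x` (entries are second partial derivatives). -/
def hess {n : ℕ} (u : EuclideanSpace ℝ (Fin n) → ℝ) (x : EuclideanSpace ℝ (Fin n)) :
    Matrix (Fin n) (Fin n) ℝ :=
  Matrix.of fun i j =>
    iteratedFDeriv ℝ 2 u x ![EuclideanSpace.single i 1, EuclideanSpace.single j 1]

/-- Laplacian: trace of the Hessian. -/
def lapl {n : ℕ} (u : EuclideanSpace ℝ (Fin n) → ℝ) (x : EuclideanSpace ℝ (Fin n)) : ℝ :=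
  ∑ i, hess u x i i

/-- Quadratic form `zᵀ A z`. -/
def quadForm {n : ℕ} (A : Matrix (Fin n) (Fin n) ℝ) (z : EuclideanSpace ℝ (Fin n)) : ℝ :=
  ∑ i, ∑ j, z i * A i j * z j

/-- Largest eigenvalue of a (symmetric) matrix: the max of `zᵀAz` over unit vectors `z`. -/
def lamMax {n : ℕ} (A : Matrix (Fin n) (Fin n) ℝ) : ℝ :=
  sSup {r : ℝ | ∃ z : EuclideanSpace ℝ (Fin n), ‖z‖ = 1 ∧ r = quadForm A z}

open Classical in
/-- Dominative p-Laplacian `D_p u(x)`, for `2 ≤ p ≤ ∞`. -/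
def Dop {n : ℕ} (p : ℝ≥0∞) (u : EuclideanSpace ℝ (Fin n) → ℝ)
    (x : EuclideanSpace ℝ (Fin n)) : ℝ :=
  if p = ⊤ then lamMax (hess u x)
  else (p.toReal - 2) * lamMax (hess u x) + lapl u x

open Classical in
/-- p-Laplacian `Δ_p u(x)` (the `∞`-Laplacian `∇u H u ∇uᵀ` for `p = ∞`).
For finite `p`, `Δ_p u = |∇u|^{p-2} Δu + (p-2)|∇u|^{p-4} ∇u Hu ∇uᵀ` with real powers,
which is automatically `0` at critical points when `p > 2` and `Δu` when `p = 2`. -/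
def DeltaOp {n : ℕ} (p : ℝ≥0∞) (u : EuclideanSpace ℝ (Fin n) → ℝ)
    (x : EuclideanSpace ℝ (Fin n)) : ℝ :=
  if p = ⊤ then quadForm (hess u x) (gradient u x)
  else ‖gradient u x‖ ^ (p.toReal - 2) * lapl u x
    + (p.toReal - 2) * ‖gradient u x‖ ^ (p.toReal - 4) * quadForm (hess u x) (gradient u x)

open Classical in
/-- Radial profile `W_{k,p}` of the fundamental solution of the p-Laplace equation in ℝᵏ. -/
def Wfun (p : ℝ≥0∞) (k : ℕ) (r : ℝ) : ℝ :=
  if p = ⊤ ∨ k = 1 then -r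
  else if p.toReal = k then -Real.log r
  else -((p.toReal - 1) / (p.toReal - k)) * r ^ ((p.toReal - k) / (p.toReal - 1))

/-- Euclidean norm of a plain vector in `Fin k → ℝ`. -/
def enorm' {k : ℕ} (v : Fin k → ℝ) : ℝ := Real.sqrt (∑ i, v i ^ 2)

/-- `u : Ω → (-∞,∞]` is a viscosity supersolution of `G(∇u, Hu) = 0` on `Ω`:
lower semicontinuous, `> -∞`, finite on a dense subset of `Ω`, and every `C²`
test function `φ` touching `u` from below at `x₀ ∈ Ω` satisfies `G φ x₀ ≤ 0`. -/
def ViscSupersol {n : ℕ}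
    (G : (EuclideanSpace ℝ (Fin n) → ℝ) → EuclideanSpace ℝ (Fin n) → ℝ)
    (Ω : Set (EuclideanSpace ℝ (Fin n))) (u : EuclideanSpace ℝ (Fin n) → EReal) : Prop :=
  LowerSemicontinuousOn u Ω ∧
  (∀ x ∈ Ω, u x ≠ ⊥) ∧
  Ω ⊆ closure {x | x ∈ Ω ∧ u x ≠ ⊤} ∧
  ∀ x₀ ∈ Ω, ∀ φ : EuclideanSpace ℝ (Fin n) → ℝ,
    ContDiffAt ℝ 2 φ x₀ → (φ x₀ : EReal) = u x₀ →
    (∀ᶠ x in nhdsWithin x₀ Ω, (φ x : EReal) ≤ u x) → G φ x₀ ≤ 0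

open Classical in
/-- EReal-valued fundamental solution `w_{m,p}` on ℝᵐ, equal to `⊤` at the pole when `p ≤ m`,
`p ≠ ∞`. -/
def wEReal (p : ℝ≥0∞) (m : ℕ) (x : EuclideanSpace ℝ (Fin m)) : EReal :=
  if x = 0 ∧ p ≤ (m : ℝ≥0∞) ∧ p ≠ ⊤ then (⊤ : EReal)
  else ((Wfun p m ‖x‖ : ℝ) : EReal)

end

/-!
Along the ray `x₀ + r q`, `q` a column of `Q`, the gradient of `u` is `U'(r) q` and the Hessian is
`(U'/r) Q Qᵀ + (U'' - U'/r) q qᵀ`. Its quadratic form on unit vectors is squeezed between its values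
`U''` at `q` and `U'/r` at a second column (this is where `k ≥ 2` enters) and
`max (U'', U'/r, 0)`, so `λ_u` is pinned down enough to read both equations as statements about
`U'` and `U''`. Where `U' ≠ 0`, `Δ_p u = 0` is the radial ODE `(p - 1) U'' + (k - 1) U'/r = 0`, and
then `D_p u = 0` forces `λ_u = U''`, which `U' > 0` rules out because `U'/r ≤ λ_u` would make
`U'' > 0`. Where `U' = 0`, `D_p u = 0` forces `U'' = 0`. So `U' ≤ 0` and `U` solves the radial
`p`-Laplace ODE, whose solutions on `(0, ∞)` are `C₁ W_{k,p} + C₂` with `C₁ = -U'(1)`.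
-/

section Cylindrical

variable {E F : Type*} [NormedAddCommGroup E] [InnerProductSpace ℝ E]
  [NormedAddCommGroup F] [InnerProductSpace ℝ F]

theorem HasFDerivAt.norm_of_ne_zero {f : E → F} {f' : E →L[ℝ] F} {x : E}
    (hf : HasFDerivAt f f' x) (h0 : f x ≠ 0) :
    HasFDerivAt (fun y => ‖f y‖) (‖f x‖⁻¹ • (innerSL ℝ (f x)).comp f') x := by
  have hsqrt := (Real.hasDerivAt_sqrt (pow_pos (norm_pos_iff.2 h0) 2).ne').comp_hasFDerivAt x
    hf.norm_sq
  simp only [Function.comp_def, Real.sqrt_sq (norm_nonneg _)] at hsqrt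
  refine hsqrt.congr_fderiv ?_
  ext v
  simp only [_root_.smul_apply, ContinuousLinearMap.comp_apply, coe_innerSL_apply, nsmul_eq_mul,
    Nat.cast_ofNat, smul_eq_mul]
  field_simp

/-- With `T = Qᵀ` this is the paper's k-cylindrical function `U(|Qᵀ(x - x₀)|)`. -/
def cylindrical (U : ℝ → ℝ) (T : E →L[ℝ] F) (x₀ : E) (x : E) : ℝ := U ‖T (x - x₀)‖

variable {U U₁ U₂ : ℝ → ℝ} (T : E →L[ℝ] F) (x₀ : E) {x : E}

theorem hasFDerivAt_map_sub : HasFDerivAt (fun x => T (x - x₀)) T x :=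
  T.hasFDerivAt.comp x ((hasFDerivAt_id x).sub_const x₀)

theorem hasFDerivAt_cylindrical (hU₁ : ∀ s, 0 < s → HasDerivAt U (U₁ s) s)
    (hx : T (x - x₀) ≠ 0) :
    HasFDerivAt (cylindrical U T x₀)
      ((U₁ ‖T (x - x₀)‖ / ‖T (x - x₀)‖) • (innerSL ℝ (T (x - x₀))).comp T) x := by
  have h := (hU₁ _ (norm_pos_iff.2 hx)).comp_hasFDerivAt x
    ((hasFDerivAt_map_sub T x₀).norm_of_ne_zero hx)
  rw [smul_smul, ← div_eq_mul_inv] at h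
  exact h

theorem fderiv_fderiv_cylindrical_apply (hU₁ : ∀ s, 0 < s → HasDerivAt U (U₁ s) s)
    (hU₂ : ∀ s, 0 < s → HasDerivAt U₁ (U₂ s) s) (hx : T (x - x₀) ≠ 0) (v w : E) :
    fderiv ℝ (fderiv ℝ (cylindrical U T x₀)) x v w =
      U₁ ‖T (x - x₀)‖ / ‖T (x - x₀)‖ * inner ℝ (T v) (T w) +
        (U₂ ‖T (x - x₀)‖ - U₁ ‖T (x - x₀)‖ / ‖T (x - x₀)‖) / ‖T (x - x₀)‖ ^ 2 *
          (inner ℝ (T (x - x₀)) (T v) * inner ℝ (T (x - x₀)) (T w)) := by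
  have hρ : 0 < ‖T (x - x₀)‖ := norm_pos_iff.2 hx
  have hopen : IsOpen {x | T (x - x₀) ≠ 0} :=
    isOpen_ne_fun (T.continuous.comp (continuous_id.sub continuous_const)) continuous_const
  have hfderiv : fderiv ℝ (cylindrical U T x₀) =ᶠ[nhds x]
      fun x => (U₁ ‖T (x - x₀)‖ / ‖T (x - x₀)‖) • (innerSL ℝ (T (x - x₀))).comp T := by
    filter_upwards [hopen.mem_nhds hx] with y hy
    exact (hasFDerivAt_cylindrical T x₀ hU₁ hy).fderiv
  have hnorm := (hasFDerivAt_map_sub T x₀ (x := x)).norm_of_ne_zero hx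
  have hcoef := ((hU₂ _ hρ).div (hasDerivAt_id _) hρ.ne').comp_hasFDerivAt x hnorm
  have hinner := ((innerSL ℝ).hasFDerivAt.comp x (hasFDerivAt_map_sub T x₀)).clm_comp
    (hasFDerivAt_const T x)
  have hD := (hcoef.smul hinner).congr_of_eventuallyEq hfderiv
  rw [hD.fderiv]
  simp only [_root_.add_apply, _root_.smul_apply,
    ContinuousLinearMap.smulRight_apply, ContinuousLinearMap.comp_apply,
    _root_.zero_apply, map_zero, ContinuousLinearMap.compL_apply,
    ContinuousLinearMap.flip_apply, innerSL_apply_apply, Function.comp_apply, smul_eq_mul,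
    Pi.div_apply, id, zero_add]
  rw [innerSL_apply_apply, innerSL_apply_apply]
  field_simp

end Cylindrical

section Hessian

open EuclideanSpace

variable {n : ℕ}

theorem hess_apply (u : EuclideanSpace ℝ (Fin n) → ℝ) (x : EuclideanSpace ℝ (Fin n)) (i j : Fin n) :
    hess u x i j = fderiv ℝ (fderiv ℝ u) x (single i 1) (single j 1) := by
  rw [hess, Matrix.of_apply, iteratedFDeriv_two_apply]
  rfl

theorem quadForm_hess (u : EuclideanSpace ℝ (Fin n) → ℝ) (x z : EuclideanSpace ℝ (Fin n)) :
    quadForm (hess u x) z = fderiv ℝ (fderiv ℝ u) x z z := by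
  conv_rhs => rw [← (basisFun (Fin n) ℝ).sum_repr z]
  simp only [quadForm, hess_apply, basisFun_repr, basisFun_apply, map_sum, map_smul,
    _root_.sum_apply, _root_.smul_apply, smul_eq_mul, Finset.mul_sum, mul_comm, mul_left_comm]
  exact Finset.sum_comm.trans (by simp only [mul_left_comm])

theorem lapl_eq_sum (u : EuclideanSpace ℝ (Fin n) → ℝ) (x : EuclideanSpace ℝ (Fin n)) :
    lapl u x = ∑ i, fderiv ℝ (fderiv ℝ u) x (single i 1) (single i 1) := by
  simp only [lapl, hess_apply]

theorem quadForm_smul (A : Matrix (Fin n) (Fin n) ℝ) (c : ℝ) (z : EuclideanSpace ℝ (Fin n)) :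
    quadForm A (c • z) = c ^ 2 * quadForm A z := by
  simp only [quadForm, PiLp.smul_apply, smul_eq_mul, Finset.mul_sum]
  exact Finset.sum_congr rfl fun i _ => Finset.sum_congr rfl fun j _ => by ring

theorem quadForm_le_lamMax {A : Matrix (Fin n) (Fin n) ℝ} {M : ℝ}
    (hM : ∀ z : EuclideanSpace ℝ (Fin n), ‖z‖ = 1 → quadForm A z ≤ M)
    {z : EuclideanSpace ℝ (Fin n)} (hz : ‖z‖ = 1) : quadForm A z ≤ lamMax A :=
  le_csSup ⟨M, by rintro _ ⟨w, hw, rfl⟩; exact hM w hw⟩ ⟨z, hz, rfl⟩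

theorem lamMax_le {A : Matrix (Fin n) (Fin n) ℝ} {M : ℝ}
    (hM : ∀ z : EuclideanSpace ℝ (Fin n), ‖z‖ = 1 → quadForm A z ≤ M)
    {z : EuclideanSpace ℝ (Fin n)} (hz : ‖z‖ = 1) : lamMax A ≤ M :=
  csSup_le ⟨_, z, hz, rfl⟩ (by rintro _ ⟨w, hw, rfl⟩; exact hM w hw)

end Hessian

section Columns

open EuclideanSpace

theorem sum_inner_single_sq {ι : Type*} [Fintype ι] [DecidableEq ι] (v : EuclideanSpace ℝ ι) :
    ∑ i, inner ℝ v (single i 1) ^ 2 = ‖v‖ ^ 2 := by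
  simp [real_norm_sq_eq, EuclideanSpace.inner_single_right]

variable {n k : ℕ} (Q : Matrix (Fin n) (Fin k) ℝ)

def column (a : Fin k) : EuclideanSpace ℝ (Fin n) := WithLp.toLp 2 (Qᵀ a)

noncomputable def transposeCLM : EuclideanSpace ℝ (Fin n) →L[ℝ] EuclideanSpace ℝ (Fin k) :=
  (Matrix.toEuclideanLin Qᵀ).toContinuousLinearMap

theorem transposeCLM_apply (z : EuclideanSpace ℝ (Fin n)) (a : Fin k) :
    transposeCLM Q z a = inner ℝ (column Q a) z := by
  simp [transposeCLM, column, Matrix.mulVec, dotProduct, PiLp.inner_apply, mul_comm]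

theorem orthonormal_column (hQ : Qᵀ * Q = 1) : Orthonormal ℝ (column Q) := by
  rw [orthonormal_iff_ite]
  intro a b
  rw [column, column, inner_matrix_col_col, Matrix.conjTranspose_eq_transpose_of_trivial, hQ,
    Matrix.one_apply]

variable {Q}

theorem transposeCLM_column (hQ : Qᵀ * Q = 1) (a : Fin k) :
    transposeCLM Q (column Q a) = single a 1 := by
  ext b
  rw [transposeCLM_apply, orthonormal_iff_ite.1 (orthonormal_column Q hQ), PiLp.single_apply]

theorem inner_single_transposeCLM (a : Fin k) (z : EuclideanSpace ℝ (Fin n)) :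
    inner ℝ (single a 1) (transposeCLM Q z) = inner ℝ (column Q a) z := by
  rw [inner_single_left, transposeCLM_apply]
  simp

theorem norm_sq_transposeCLM (z : EuclideanSpace ℝ (Fin n)) :
    ‖transposeCLM Q z‖ ^ 2 = ∑ a, inner ℝ (column Q a) z ^ 2 := by
  simp [real_norm_sq_eq, transposeCLM_apply]

theorem norm_transposeCLM_le (hQ : Qᵀ * Q = 1) (z : EuclideanSpace ℝ (Fin n)) :
    ‖transposeCLM Q z‖ ≤ ‖z‖ := by
  have := (orthonormal_column Q hQ).sum_inner_products_le (x := z) (s := Finset.univ)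
  simp only [Real.norm_eq_abs, sq_abs] at this
  rw [← sq_le_sq₀ (norm_nonneg _) (norm_nonneg _), norm_sq_transposeCLM]
  exact this

theorem sum_norm_sq_transposeCLM_single (hQ : Qᵀ * Q = 1) :
    ∑ i, ‖transposeCLM Q (single i 1)‖ ^ 2 = k := by
  simp_rw [norm_sq_transposeCLM]
  rw [Finset.sum_comm]
  simp [sum_inner_single_sq, (orthonormal_column Q hQ).1 _]

end Columns

theorem mul_add_mul_le_max {α β s t : ℝ} (ht : 0 ≤ t) (hts : t ≤ s) (hs : s ≤ 1) :
    α * s + β * t ≤ max (max (α + β) α) 0 := by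
  have h₁ : α + β ≤ max (max (α + β) α) 0 := (le_max_left _ _).trans (le_max_left _ _)
  have h₂ : α ≤ max (max (α + β) α) 0 := (le_max_right _ _).trans (le_max_left _ _)
  have h₀ : 0 ≤ max (max (α + β) α) 0 := le_max_right _ _
  -- `α s + β t = (α + β) t + α (s - t)`
  linarith [mul_le_mul_of_nonneg_right h₁ ht, mul_le_mul_of_nonneg_right h₂ (sub_nonneg.2 hts),
    mul_le_mul_of_nonneg_left hs h₀]

section Ray

open EuclideanSpace

variable {n k : ℕ} {Q : Matrix (Fin n) (Fin k) ℝ} (x₀ : EuclideanSpace ℝ (Fin n))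
  {U U₁ U₂ : ℝ → ℝ} {a : Fin k} {r : ℝ}

theorem transposeCLM_ray (hQ : Qᵀ * Q = 1) :
    transposeCLM Q (x₀ + r • column Q a - x₀) = r • single a 1 := by
  rw [add_sub_cancel_left, map_smul, transposeCLM_column hQ]

theorem norm_transposeCLM_ray (hQ : Qᵀ * Q = 1) (hr : 0 < r) :
    ‖transposeCLM Q (x₀ + r • column Q a - x₀)‖ = r := by
  rw [transposeCLM_ray x₀ hQ, norm_smul, PiLp.norm_single, norm_one, mul_one,
    Real.norm_of_nonneg hr.le]

theorem transposeCLM_ray_ne_zero (hQ : Qᵀ * Q = 1) (hr : 0 < r) :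
    transposeCLM Q (x₀ + r • column Q a - x₀) ≠ 0 := by
  rw [← norm_pos_iff, norm_transposeCLM_ray x₀ hQ hr]
  exact hr

theorem gradient_cylindrical_ray (hQ : Qᵀ * Q = 1) (hU₁ : ∀ s, 0 < s → HasDerivAt U (U₁ s) s)
    (hr : 0 < r) :
    gradient (cylindrical U (transposeCLM Q) x₀) (x₀ + r • column Q a) = U₁ r • column Q a := by
  refine (hasGradientAt_iff_hasFDerivAt.2 ?_).gradient
  refine (hasFDerivAt_cylindrical _ x₀ hU₁ (transposeCLM_ray_ne_zero x₀ hQ hr)).congr_fderiv ?_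
  ext v
  rw [norm_transposeCLM_ray x₀ hQ hr, transposeCLM_ray x₀ hQ]
  simp [inner_single_transposeCLM]
  field_simp

theorem fderiv_fderiv_cylindrical_ray_apply (hQ : Qᵀ * Q = 1)
    (hU₁ : ∀ s, 0 < s → HasDerivAt U (U₁ s) s) (hU₂ : ∀ s, 0 < s → HasDerivAt U₁ (U₂ s) s)
    (hr : 0 < r) (v w : EuclideanSpace ℝ (Fin n)) :
    fderiv ℝ (fderiv ℝ (cylindrical U (transposeCLM Q) x₀)) (x₀ + r • column Q a) v w =
      U₁ r / r * inner ℝ (transposeCLM Q v) (transposeCLM Q w) +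
        (U₂ r - U₁ r / r) * (inner ℝ (column Q a) v * inner ℝ (column Q a) w) := by
  rw [fderiv_fderiv_cylindrical_apply _ x₀ hU₁ hU₂ (transposeCLM_ray_ne_zero x₀ hQ hr),
    norm_transposeCLM_ray x₀ hQ hr, transposeCLM_ray x₀ hQ]
  simp only [real_inner_smul_left, inner_single_transposeCLM]
  field_simp

theorem quadForm_hess_cylindrical_ray (hQ : Qᵀ * Q = 1)
    (hU₁ : ∀ s, 0 < s → HasDerivAt U (U₁ s) s) (hU₂ : ∀ s, 0 < s → HasDerivAt U₁ (U₂ s) s)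
    (hr : 0 < r) (z : EuclideanSpace ℝ (Fin n)) :
    quadForm (hess (cylindrical U (transposeCLM Q) x₀) (x₀ + r • column Q a)) z =
      U₁ r / r * ‖transposeCLM Q z‖ ^ 2 + (U₂ r - U₁ r / r) * inner ℝ (column Q a) z ^ 2 := by
  rw [quadForm_hess, fderiv_fderiv_cylindrical_ray_apply x₀ hQ hU₁ hU₂ hr,
    real_inner_self_eq_norm_sq]
  ring

theorem lapl_cylindrical_ray (hQ : Qᵀ * Q = 1)
    (hU₁ : ∀ s, 0 < s → HasDerivAt U (U₁ s) s) (hU₂ : ∀ s, 0 < s → HasDerivAt U₁ (U₂ s) s)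
    (hr : 0 < r) :
    lapl (cylindrical U (transposeCLM Q) x₀) (x₀ + r • column Q a) =
      U₂ r + (k - 1) * (U₁ r / r) := by
  simp only [lapl_eq_sum, fderiv_fderiv_cylindrical_ray_apply x₀ hQ hU₁ hU₂ hr,
    real_inner_self_eq_norm_sq, ← sq, Finset.sum_add_distrib, ← Finset.mul_sum,
    sum_norm_sq_transposeCLM_single hQ]
  rw [sum_inner_single_sq, (orthonormal_column Q hQ).1 a]
  ring
theorem inner_column_sq_le (z : EuclideanSpace ℝ (Fin n)) :
    inner ℝ (column Q a) z ^ 2 ≤ ‖transposeCLM Q z‖ ^ 2 := by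
  rw [← inner_single_transposeCLM, ← sq_abs]
  refine pow_le_pow_left₀ (abs_nonneg _) ?_ 2
  simpa using abs_real_inner_le_norm (single a (1 : ℝ)) (transposeCLM Q z)

theorem quadForm_hess_cylindrical_ray_le (hQ : Qᵀ * Q = 1)
    (hU₁ : ∀ s, 0 < s → HasDerivAt U (U₁ s) s) (hU₂ : ∀ s, 0 < s → HasDerivAt U₁ (U₂ s) s)
    (hr : 0 < r) {z : EuclideanSpace ℝ (Fin n)} (hz : ‖z‖ = 1) :
    quadForm (hess (cylindrical U (transposeCLM Q) x₀) (x₀ + r • column Q a)) z ≤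
      max (max (U₂ r) (U₁ r / r)) 0 := by
  have hTz : ‖transposeCLM Q z‖ ^ 2 ≤ 1 := by
    rw [sq_le_one_iff₀ (norm_nonneg _)]
    exact hz ▸ norm_transposeCLM_le hQ z
  rw [quadForm_hess_cylindrical_ray x₀ hQ hU₁ hU₂ hr]
  simpa using mul_add_mul_le_max (α := U₁ r / r) (β := U₂ r - U₁ r / r) (sq_nonneg _)
    (inner_column_sq_le z) hTz

theorem quadForm_hess_cylindrical_ray_column (hQ : Qᵀ * Q = 1)
    (hU₁ : ∀ s, 0 < s → HasDerivAt U (U₁ s) s) (hU₂ : ∀ s, 0 < s → HasDerivAt U₁ (U₂ s) s)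
    (hr : 0 < r) (b : Fin k) :
    quadForm (hess (cylindrical U (transposeCLM Q) x₀) (x₀ + r • column Q a)) (column Q b) =
      if b = a then U₂ r else U₁ r / r := by
  rw [quadForm_hess_cylindrical_ray x₀ hQ hU₁ hU₂ hr, transposeCLM_column hQ, PiLp.norm_single,
    norm_one, orthonormal_iff_ite.1 (orthonormal_column Q hQ)]
  by_cases h : b = a
  · simp [h]
  · simp [h, Ne.symm h]

end Ray

theorem abs_rpow_sub_four_mul_sq {a : ℝ} (ha : a ≠ 0) (p : ℝ) :
    |a| ^ (p - 4) * a ^ 2 = |a| ^ (p - 2) := by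
  rw [← sq_abs, ← Real.rpow_natCast, ← Real.rpow_add (abs_pos.2 ha)]
  norm_num
  ring_nf

theorem radial_ode_of_pLaplacian_eq_zero {p k r d₁ d₂ : ℝ} (hd₁ : d₁ ≠ 0)
    (hΔ : |d₁| ^ (p - 2) * (d₂ + (k - 1) * (d₁ / r)) +
      (p - 2) * |d₁| ^ (p - 4) * (d₁ ^ 2 * d₂) = 0) :
    (p - 1) * d₂ + (k - 1) * (d₁ / r) = 0 := by
  have hfactor : |d₁| ^ (p - 2) * ((p - 1) * d₂ + (k - 1) * (d₁ / r)) = 0 := by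
    rw [← hΔ, mul_assoc _ (_ ^ (p - 4)), ← mul_assoc (_ ^ (p - 4)), abs_rpow_sub_four_mul_sq hd₁]
    ring
  exact (mul_eq_zero.1 hfactor).resolve_left (Real.rpow_pos_of_pos (abs_pos.2 hd₁) _).ne'

/-- `d₁, d₂` stand for `U'(r), U''(r)` and `μ` for the largest eigenvalue of the Hessian. -/
theorem radial_ode_of_pLaplacian_dominative {p k r d₁ d₂ μ : ℝ} (hp : 2 < p) (hk : 1 ≤ k)
    (hr : 0 < r)
    (hΔ : |d₁| ^ (p - 2) * (d₂ + (k - 1) * (d₁ / r)) +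
      (p - 2) * |d₁| ^ (p - 4) * (d₁ ^ 2 * d₂) = 0)
    (hD : (p - 2) * μ + (d₂ + (k - 1) * (d₁ / r)) = 0)
    (hμ₂ : d₂ ≤ μ) (hμ₁ : d₁ / r ≤ μ) (hμ : μ ≤ max (max d₂ (d₁ / r)) 0) :
    d₁ ≤ 0 ∧ (p - 1) * d₂ + (k - 1) * (d₁ / r) = 0 := by
  rcases eq_or_ne d₁ 0 with rfl | hd₁
  · simp only [zero_div, mul_zero, add_zero] at hD hμ₁ hμ ⊢
    have hd₂ : d₂ ≤ 0 := by nlinarith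
    have hμ0 : μ = 0 := le_antisymm (hμ.trans (by simp [hd₂])) hμ₁
    have hd₂0 : d₂ = 0 := by rw [hμ0] at hD; linarith
    simp [hd₂0]
  · have hode := radial_ode_of_pLaplacian_eq_zero hd₁ hΔ
    have hμd₂ : μ = d₂ := by nlinarith
    refine ⟨not_lt.1 fun hpos => ?_, hode⟩
    have : 0 < d₁ / r := div_pos hpos hr
    nlinarith
theorem radial_ode_of_pLaplacian_dominative_ray {n k : ℕ} {Q : Matrix (Fin n) (Fin k) ℝ}
    (x₀ : EuclideanSpace ℝ (Fin n)) {U U₁ U₂ : ℝ → ℝ} {a b : Fin k} {r : ℝ} {p : ℝ≥0∞}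
    (hp : 2 < p.toReal) (hp' : p ≠ ⊤) (hQ : Qᵀ * Q = 1) (hba : b ≠ a)
    (hU₁ : ∀ s, 0 < s → HasDerivAt U (U₁ s) s) (hU₂ : ∀ s, 0 < s → HasDerivAt U₁ (U₂ s) s)
    (hr : 0 < r)
    (hΔ : DeltaOp p (cylindrical U (transposeCLM Q) x₀) (x₀ + r • column Q a) = 0)
    (hD : Dop p (cylindrical U (transposeCLM Q) x₀) (x₀ + r • column Q a) = 0) :
    U₁ r ≤ 0 ∧ (p.toReal - 1) * U₂ r + (k - 1) * (U₁ r / r) = 0 := by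
  have hunit := (orthonormal_column Q hQ).1
  have hcol := quadForm_hess_cylindrical_ray_column x₀ hQ hU₁ hU₂ hr (a := a)
  have hbound := fun z (hz : ‖z‖ = 1) =>
    quadForm_hess_cylindrical_ray_le x₀ hQ hU₁ hU₂ hr (a := a) hz
  rw [DeltaOp, if_neg hp', gradient_cylindrical_ray x₀ hQ hU₁ hr, norm_smul, hunit, mul_one,
    Real.norm_eq_abs, quadForm_smul, hcol, if_pos rfl, lapl_cylindrical_ray x₀ hQ hU₁ hU₂ hr] at hΔ
  rw [Dop, if_neg hp', lapl_cylindrical_ray x₀ hQ hU₁ hU₂ hr] at hD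
  refine radial_ode_of_pLaplacian_dominative hp (Nat.one_le_cast.2 a.pos) hr hΔ hD ?_ ?_
    (lamMax_le hbound (hunit a))
  · simpa [hcol] using quadForm_le_lamMax hbound (hunit a)
  · simpa [hcol, hba] using quadForm_le_lamMax hbound (hunit b)
theorem eq_of_hasDerivAt_zero_Ioi {f : ℝ → ℝ} (hf : ∀ r, 0 < r → HasDerivAt f 0 r) {r s : ℝ}
    (hr : 0 < r) (hs : 0 < s) : f r = f s :=
  isOpen_Ioi.is_const_of_deriv_eq_zero isPreconnected_Ioi
    (fun t ht => (hf t ht).differentiableAt.differentiableWithinAt) (fun t ht => (hf t ht).deriv)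
    hr hs

theorem hasDerivAt_Wfun {p : ℝ≥0∞} {k : ℕ} (hp' : p ≠ ⊤) (hp : 1 < p.toReal) (hk : 1 ≤ k)
    {r : ℝ} (hr : 0 < r) :
    HasDerivAt (Wfun p k) (-r ^ (-((k - 1) / (p.toReal - 1)))) r := by
  have hp1 : p.toReal - 1 ≠ 0 := by linarith
  rcases eq_or_lt_of_le hk with rfl | hk
  · have hW : Wfun p 1 = fun t => -t := funext fun t => by simp [Wfun]
    rw [hW]
    exact (hasDerivAt_neg r).congr_deriv (by simp)
  by_cases hpk : p.toReal = k
  · have hW : Wfun p k = fun t => -Real.log t := funext fun t => by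
      simp [Wfun, hp', hk.ne', hpk]
    rw [hW, ← hpk, div_self hp1, Real.rpow_neg_one]
    exact (Real.hasDerivAt_log hr.ne').neg
  · have hW : Wfun p k = fun t =>
        -((p.toReal - 1) / (p.toReal - k)) * t ^ ((p.toReal - k) / (p.toReal - 1)) :=
      funext fun t => by simp [Wfun, hp', hk.ne', hpk]
    rw [hW]
    refine ((Real.hasDerivAt_rpow_const (Or.inl hr.ne')).const_mul _).congr_deriv ?_
    have hpk' : p.toReal - k ≠ 0 := sub_ne_zero.2 hpk
    rw [show (p.toReal - k) / (p.toReal - 1) - 1 = -((k - 1) / (p.toReal - 1)) by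
      field_simp; ring]
    field_simp

/-- `r ^ ((k - 1) / (p - 1)) U'` is a first integral of the radial `p`-Laplace ODE. -/
theorem exists_eq_mul_Wfun_add {p : ℝ≥0∞} {k : ℕ} (hp' : p ≠ ⊤) (hp : 1 < p.toReal) (hk : 1 ≤ k)
    {U U₁ U₂ : ℝ → ℝ} (hU₁ : ∀ s, 0 < s → HasDerivAt U (U₁ s) s)
    (hU₂ : ∀ s, 0 < s → HasDerivAt U₁ (U₂ s) s)
    (hode : ∀ r, 0 < r → (p.toReal - 1) * U₂ r + (k - 1) * (U₁ r / r) = 0) :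
    ∃ C₂ : ℝ, ∀ r, 0 < r → U r = -U₁ 1 * Wfun p k r + C₂ := by
  set α : ℝ := (k - 1) / (p.toReal - 1)
  have hp1 : p.toReal - 1 ≠ 0 := by linarith
  have hfirst : ∀ r, 0 < r → HasDerivAt (fun t => t ^ α * U₁ t) 0 r := by
    intro r hr
    refine ((Real.hasDerivAt_rpow_const (Or.inl hr.ne')).mul (hU₂ r hr)).congr_deriv ?_
    have hU₂r : U₂ r = -(α * (U₁ r / r)) := by
      have := hode r hr
      simp only [α]
      field_simp at this ⊢
      linear_combination this
    rw [hU₂r, Real.rpow_sub_one hr.ne']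
    field_simp
    ring
  have hU₁_eq : ∀ r, 0 < r → U₁ r = U₁ 1 * r ^ (-α) := by
    intro r hr
    have := eq_of_hasDerivAt_zero_Ioi hfirst hr one_pos
    rw [Real.one_rpow, one_mul] at this
    rw [← this, Real.rpow_neg hr.le]
    field_simp
  have hsecond : ∀ r, 0 < r → HasDerivAt (fun t => U t + U₁ 1 * Wfun p k t) 0 r := by
    intro r hr
    refine ((hU₁ r hr).add ((hasDerivAt_Wfun hp' hp hk hr).const_mul _)).congr_deriv ?_
    rw [hU₁_eq r hr]
    ring
  exact ⟨U 1 + U₁ 1 * Wfun p k 1, fun r hr => by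
    linarith [eq_of_hasDerivAt_zero_Ioi hsecond hr one_pos]⟩
theorem ContDiffOn.hasDerivAt_deriv_and_deriv_deriv {U : ℝ → ℝ} {s : Set ℝ} (hs : IsOpen s)
    (hU : ContDiffOn ℝ 2 U s) :
    (∀ x ∈ s, HasDerivAt U (deriv U x) x) ∧
      ∀ x ∈ s, HasDerivAt (deriv U) (deriv (deriv U) x) x := by
  have hderiv := ((contDiffOn_succ_iff_deriv_of_isOpen (n := 1) hs).1 hU).2.2
  exact ⟨fun x hx => ((hU.contDiffAt (hs.mem_nhds hx)).differentiableAt two_ne_zero).hasDerivAt,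
    fun x hx => ((hderiv.contDiffAt (hs.mem_nhds hx)).differentiableAt one_ne_zero).hasDerivAt⟩

theorem mulVec_transpose_sub {n k : ℕ} (Q : Matrix (Fin n) (Fin k) ℝ)
    (x x₀ : EuclideanSpace ℝ (Fin n)) :
    (Qᵀ.mulVec fun i => x i - x₀ i) = WithLp.ofLp (transposeCLM Q (x - x₀)) := rfl

theorem enorm'_eq_norm {k : ℕ} (v : EuclideanSpace ℝ (Fin k)) : enorm' (WithLp.ofLp v) = ‖v‖ := by
  simp [enorm', EuclideanSpace.norm_eq]

theorem stmt_5_general {n k : ℕ} (hk : 2 ≤ k)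
    (p : ℝ≥0∞) (hp : 2 < p) (hp' : p ≠ ⊤)
    (Q : Matrix (Fin n) (Fin k) ℝ) (hQ : Qᵀ * Q = 1)
    (x₀ : EuclideanSpace ℝ (Fin n))
    (U : ℝ → ℝ) (hU : ContDiffOn ℝ 2 U (Set.Ioi 0))
    (u : EuclideanSpace ℝ (Fin n) → ℝ)
    (hu : ∀ x, u x = U (enorm' (Qᵀ.mulVec fun i => x i - x₀ i)))
    (hsol : ∀ x : EuclideanSpace ℝ (Fin n), (Qᵀ.mulVec fun i => x i - x₀ i) ≠ 0 →
      DeltaOp p u x = 0 ∧ Dop p u x = 0) :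
    ∃ C₁ C₂ : ℝ, 0 ≤ C₁ ∧ ∀ r : ℝ, 0 < r → U r = C₁ * Wfun p k r + C₂ := by
  have hpR : 2 < p.toReal := by simpa using (ENNReal.toReal_lt_toReal (by norm_num) hp').2 hp
  obtain ⟨hU₁, hU₂⟩ := hU.hasDerivAt_deriv_and_deriv_deriv isOpen_Ioi
  have hu' : u = cylindrical U (transposeCLM Q) x₀ :=
    funext fun x => by rw [hu, mulVec_transpose_sub, enorm'_eq_norm, cylindrical]
  have hode : ∀ r, 0 < r → deriv U r ≤ 0 ∧
      (p.toReal - 1) * deriv (deriv U) r + (k - 1) * (deriv U r / r) = 0 := by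
    intro r hr
    let a : Fin k := ⟨0, by omega⟩
    have hx : (Qᵀ.mulVec fun i => (x₀ + r • column Q a) i - x₀ i) ≠ 0 := by
      rw [mulVec_transpose_sub, Ne, WithLp.ofLp_eq_zero]
      exact transposeCLM_ray_ne_zero x₀ hQ hr
    obtain ⟨hΔ, hD⟩ := hsol _ hx
    rw [hu'] at hΔ hD
    exact radial_ode_of_pLaplacian_dominative_ray x₀ hpR hp' hQ (b := ⟨1, by omega⟩)
      (by simp [a, Fin.ext_iff]) hU₁ hU₂ hr hΔ hD
  obtain ⟨C₂, hC₂⟩ := exists_eq_mul_Wfun_add hp' (by linarith) (by omega) hU₁ hU₂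
    fun r hr => (hode r hr).2
  exact ⟨-deriv U 1, C₂, neg_nonneg.2 (hode 1 one_pos).1, hC₂⟩

/-- Classification of cylindrical dominative p-harmonic functions. -/
theorem stmt_5 {n k : ℕ} (hn : 2 ≤ n) (hk : 2 ≤ k) (hkn : k ≤ n)
    (p : ℝ≥0∞) (hp : 2 < p) (hp' : p ≠ ⊤)
    (Q : Matrix (Fin n) (Fin k) ℝ) (hQ : Qᵀ * Q = 1)
    (x₀ : EuclideanSpace ℝ (Fin n))
    (U : ℝ → ℝ) (hU : ContDiffOn ℝ 2 U (Set.Ioi 0))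
    (u : EuclideanSpace ℝ (Fin n) → ℝ)
    (hu : ∀ x, u x = U (enorm' (Qᵀ.mulVec fun i => x i - x₀ i)))
    (hsol : ∀ x : EuclideanSpace ℝ (Fin n), (Qᵀ.mulVec fun i => x i - x₀ i) ≠ 0 →
      DeltaOp p u x = 0 ∧ Dop p u x = 0) :
    ∃ C₁ C₂ : ℝ, 0 ≤ C₁ ∧ ∀ r : ℝ, 0 < r → U r = C₁ * Wfun p k r + C₂ :=
  stmt_5_general hk p hp hp' Q hQ x₀ U hU u hu hsol
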